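/- arXiv:2506.14171 — 3 statements merged into one kernel-verified Lean document; each statement's English description precedes it below -/
import Mathlib

section
/- Let τ = (k, k+1) be an adjacent transposition in S_N. Then for all σ ∈ S_N, the Bethe amplitudes satisfy A_σ(τ·ξ) = (-(1+ξ_k ξ_{k+1} - 2Δξ_k)/(1+ξ_k ξ_{k+1} - 2Δξ_{k+1})) · A_{τ∘σ}(ξ), where τ·ξ denotes permuting the entries of ξ by τ. -/
open Finset

/-- The Bethe amplitude `A_σ(ξ)` with anisotropy `Δ`. -/
noncomputable def betheAmp (N : ℕ) (Δ : ℝ) (ξ : Fin N → ℂ) (σ : Equiv.Perm (Fin N)) : ℂ :=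
  ∏ p ∈ Finset.univ.filter (fun p : Fin N × Fin N => p.1 < p.2 ∧ σ p.2 < σ p.1),
    (-((1 + ξ (σ p.1) * ξ (σ p.2) - 2 * (Δ : ℂ) * ξ (σ p.1)) /
        (1 + ξ (σ p.1) * ξ (σ p.2) - 2 * (Δ : ℂ) * ξ (σ p.2))))

/-- For an adjacent transposition `τ = (k, k+1)` one has
`A_σ(τ·ξ) = (-(1+ξ_k ξ_{k+1} - 2Δξ_k)/(1+ξ_k ξ_{k+1} - 2Δξ_{k+1})) · A_{τ∘σ}(ξ)`. -/
theorem stmt1 (N : ℕ) (Δ : ℝ) (ξ : Fin N → ℂ)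
    (h : ∀ i j : Fin N, 1 + ξ i * ξ j - 2 * (Δ : ℂ) * ξ i ≠ 0)
    (k : ℕ) (hk : k + 1 < N) (σ : Equiv.Perm (Fin N)) :
    betheAmp N Δ
        (ξ ∘ (Equiv.swap (⟨k, Nat.lt_of_succ_lt hk⟩ : Fin N) (⟨k + 1, hk⟩ : Fin N))) σ
      = (-((1 + ξ ⟨k, Nat.lt_of_succ_lt hk⟩ * ξ ⟨k + 1, hk⟩
              - 2 * (Δ : ℂ) * ξ ⟨k, Nat.lt_of_succ_lt hk⟩) /
           (1 + ξ ⟨k, Nat.lt_of_succ_lt hk⟩ * ξ ⟨k + 1, hk⟩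
              - 2 * (Δ : ℂ) * ξ ⟨k + 1, hk⟩)))
        * betheAmp N Δ ξ
            (Equiv.swap (⟨k, Nat.lt_of_succ_lt hk⟩ : Fin N) (⟨k + 1, hk⟩ : Fin N) * σ) := by
  classical
  set a : Fin N := ⟨k, Nat.lt_of_succ_lt hk⟩ with ha
  set b : Fin N := ⟨k + 1, hk⟩ with hb
  set τ : Equiv.Perm (Fin N) := Equiv.swap a b with hτ
  have hav : (a : ℕ) = k := rfl
  have hbv : (b : ℕ) = k + 1 := rfl
  have hab : a < b := by simp [Fin.lt_def, hav, hbv]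
  have hτa : τ a = b := Equiv.swap_apply_left a b
  have hτb : τ b = a := Equiv.swap_apply_right a b
  have key : ∀ x y : Fin N, ¬(x = a ∧ y = b) → ¬(x = b ∧ y = a) →
      (τ x < τ y ↔ x < y) := by
    intro x y h1 h2
    simp only [hτ, Equiv.swap_apply_def]
    simp only [Fin.ext_iff, Fin.lt_def, hav, hbv] at h1 h2 ⊢
    split_ifs <;> omega
  have hC1 : (1 + ξ a * ξ b - 2 * (Δ:ℂ) * ξ a) ≠ 0 := h a b
  have hC2 : (1 + ξ a * ξ b - 2 * (Δ:ℂ) * ξ b) ≠ 0 := by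
    have := h b a; rwa [mul_comm (ξ b) (ξ a)] at this
  have hne : σ.symm a ≠ σ.symm b := fun e => (ne_of_lt hab) (σ.symm.injective e)
  simp only [betheAmp, Function.comp_apply, Equiv.Perm.mul_apply]
  rcases lt_or_gt_of_ne hne with hc | hc
  · -- σ⁻¹ a < σ⁻¹ b
    have hset : (Finset.univ.filter
          (fun p : Fin N × Fin N => p.1 < p.2 ∧ τ (σ p.2) < τ (σ p.1)))
        = insert (σ.symm a, σ.symm b)
            (Finset.univ.filter (fun p : Fin N × Fin N => p.1 < p.2 ∧ σ p.2 < σ p.1)) := by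
      ext p
      simp only [Finset.mem_filter, Finset.mem_insert, Finset.mem_univ, true_and]
      constructor
      · rintro ⟨h12, hlt⟩
        by_cases h1 : σ p.2 = a ∧ σ p.1 = b
        · have e1 : p.1 = σ.symm b := by rw [← h1.2, Equiv.symm_apply_apply]
          have e2 : p.2 = σ.symm a := by rw [← h1.1, Equiv.symm_apply_apply]
          rw [e1, e2] at h12
          exact absurd h12 (not_lt.mpr hc.le)
        · by_cases h2 : σ p.2 = b ∧ σ p.1 = a
          · left
            have e1 : p.1 = σ.symm a := by rw [← h2.2, Equiv.symm_apply_apply]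
            have e2 : p.2 = σ.symm b := by rw [← h2.1, Equiv.symm_apply_apply]
            exact Prod.ext e1 e2
          · exact Or.inr ⟨h12, (key _ _ h1 h2).mp hlt⟩
      · rintro (rfl | ⟨h12, hlt⟩)
        · refine ⟨hc, ?_⟩
          simp only [Equiv.apply_symm_apply, hτa, hτb]
          exact hab
        · refine ⟨h12, ?_⟩
          by_cases h1 : σ p.2 = a ∧ σ p.1 = b
          · have e1 : p.1 = σ.symm b := by rw [← h1.2, Equiv.symm_apply_apply]
            have e2 : p.2 = σ.symm a := by rw [← h1.1, Equiv.symm_apply_apply]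
            rw [e1, e2] at h12
            exact absurd h12 (not_lt.mpr hc.le)
          · by_cases h2 : σ p.2 = b ∧ σ p.1 = a
            · rw [h2.1, h2.2] at hlt
              exact absurd hlt (not_lt.mpr hab.le)
            · exact (key _ _ h1 h2).mpr hlt
    have hq : (σ.symm a, σ.symm b) ∉
        (Finset.univ.filter (fun p : Fin N × Fin N => p.1 < p.2 ∧ σ p.2 < σ p.1)) := by
      simp [Equiv.apply_symm_apply, not_lt.mpr hab.le]
    erw [hset]
    rw [Finset.prod_insert hq]
    simp only [Equiv.apply_symm_apply, hτa, hτb]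
    rw [← mul_assoc]
    have hCg : (-((1 + ξ a * ξ b - 2 * (Δ:ℂ) * ξ a) /
          (1 + ξ a * ξ b - 2 * (Δ:ℂ) * ξ b))) *
        (-((1 + ξ b * ξ a - 2 * (Δ:ℂ) * ξ b) /
          (1 + ξ b * ξ a - 2 * (Δ:ℂ) * ξ a))) = 1 := by
      rw [mul_comm (ξ b) (ξ a)]
      rw [neg_mul_neg, div_mul_div_comm, mul_comm (1 + ξ a * ξ b - 2 * (Δ:ℂ) * ξ b), div_self (mul_ne_zero hC1 hC2)]
    rw [hCg, one_mul]
  · -- σ⁻¹ b < σ⁻¹ a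
    have hset : (Finset.univ.filter
          (fun p : Fin N × Fin N => p.1 < p.2 ∧ σ p.2 < σ p.1))
        = insert (σ.symm b, σ.symm a)
            (Finset.univ.filter (fun p : Fin N × Fin N => p.1 < p.2 ∧ τ (σ p.2) < τ (σ p.1))) := by
      ext p
      simp only [Finset.mem_filter, Finset.mem_insert, Finset.mem_univ, true_and]
      constructor
      · rintro ⟨h12, hlt⟩
        by_cases h1 : σ p.2 = a ∧ σ p.1 = b
        · left
          have e1 : p.1 = σ.symm b := by rw [← h1.2, Equiv.symm_apply_apply]
          have e2 : p.2 = σ.symm a := by rw [← h1.1, Equiv.symm_apply_apply]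
          exact Prod.ext e1 e2
        · by_cases h2 : σ p.2 = b ∧ σ p.1 = a
          · rw [h2.1, h2.2] at hlt
            exact absurd hlt (not_lt.mpr hab.le)
          · exact Or.inr ⟨h12, (key _ _ h1 h2).mpr hlt⟩
      · rintro (rfl | ⟨h12, hlt⟩)
        · refine ⟨hc, ?_⟩
          simp only [Equiv.apply_symm_apply, hτa, hτb]
          exact hab
        · refine ⟨h12, ?_⟩
          by_cases h1 : σ p.2 = a ∧ σ p.1 = b
          · rw [h1.1, h1.2, hτa, hτb] at hlt
            exact absurd hlt (not_lt.mpr hab.le)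
          · by_cases h2 : σ p.2 = b ∧ σ p.1 = a
            · have e1 : p.1 = σ.symm a := by rw [← h2.2, Equiv.symm_apply_apply]
              have e2 : p.2 = σ.symm b := by rw [← h2.1, Equiv.symm_apply_apply]
              rw [e1, e2] at h12
              exact absurd h12 (not_lt.mpr hc.le)
            · exact (key _ _ h1 h2).mp hlt
    have hq : (σ.symm b, σ.symm a) ∉
        (Finset.univ.filter (fun p : Fin N × Fin N => p.1 < p.2 ∧ τ (σ p.2) < τ (σ p.1))) := by
      simp [Equiv.apply_symm_apply, hτa, hτb, not_lt.mpr hab.le]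
    rw [hset, Finset.prod_insert hq]
    simp only [Equiv.apply_symm_apply, hτa, hτb]
    rfl
end

section
/- For any ξ ∈ ℂ^N satisfying the genericity condition, any x ∈ ℤ^N, and any τ ∈ S_N, the coordinate function satisfies u(ξ, x) = λ · u(τ·ξ, x) for some nonzero λ ∈ ℂ depending only on ξ and τ. -/
open Finset

/-- The Bethe coordinate function `u(ξ, x)`. -/
noncomputable def betheU (N : ℕ) (Δ : ℝ) (ξ : Fin N → ℂ) (x : Fin N → ℤ) : ℂ :=
  ∑ σ : Equiv.Perm (Fin N), betheAmp N Δ ξ σ * ∏ i, ξ (σ i) ^ x i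

/-- The basic two-particle factor. -/
noncomputable def bC {N : ℕ} (Δ : ℝ) (ξ : Fin N → ℂ) (a b : Fin N) : ℂ :=
  -((1 + ξ a * ξ b - 2 * (Δ : ℂ) * ξ a) / (1 + ξ a * ξ b - 2 * (Δ : ℂ) * ξ b))

lemma bC_mul {N : ℕ} {Δ : ℝ} {ξ : Fin N → ℂ}
    (h : ∀ i j : Fin N, 1 + ξ i * ξ j - 2 * (Δ : ℂ) * ξ i ≠ 0) (a b : Fin N) :
    bC Δ ξ a b * bC Δ ξ b a = 1 := by
  have h1 := h a b
  have h2 := h b a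
  have h2' : 1 + ξ a * ξ b - 2 * (Δ : ℂ) * ξ b ≠ 0 := by
    rw [mul_comm (ξ a)]; exact h2
  have h1' : 1 + ξ b * ξ a - 2 * (Δ : ℂ) * ξ a ≠ 0 := by
    rw [mul_comm (ξ b)]; exact h1
  unfold bC
  rw [neg_mul_neg, div_mul_div_comm, div_eq_one_iff_eq (mul_ne_zero h2' h1')]
  ring

lemma bC_ne {N : ℕ} {Δ : ℝ} {ξ : Fin N → ℂ}
    (h : ∀ i j : Fin N, 1 + ξ i * ξ j - 2 * (Δ : ℂ) * ξ i ≠ 0) (a b : Fin N) :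
    bC Δ ξ a b ≠ 0 :=
  left_ne_zero_of_mul_eq_one (bC_mul h a b)

/-- Reindex the amplitude product by values instead of positions. -/
lemma amp_eq (N : ℕ) (Δ : ℝ) (ξ : Fin N → ℂ) (σ : Equiv.Perm (Fin N)) :
    betheAmp N Δ ξ σ =
      ∏ q ∈ Finset.univ.filter
          (fun q : Fin N × Fin N => σ⁻¹ q.1 < σ⁻¹ q.2 ∧ q.2 < q.1),
        bC Δ ξ q.1 q.2 := by
  unfold betheAmp bC
  refine Finset.prod_nbij' (fun p => (σ p.1, σ p.2)) (fun q => (σ⁻¹ q.1, σ⁻¹ q.2))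
    ?_ ?_ ?_ ?_ ?_
  · intro p hp
    simp only [mem_filter, mem_univ, true_and] at hp ⊢
    simpa using hp
  · intro q hq
    simp only [mem_filter, mem_univ, true_and] at hq ⊢
    simpa using hq
  · intro p _; simp
  · intro q _; simp
  · intro p _; rfl

/-- Reindex a filtered product over pairs by the swap. -/
lemma prod_swap_filter {N : ℕ} (P : Fin N × Fin N → Prop) [DecidablePred P]
    (f : Fin N → Fin N → ℂ) :
    ∏ q ∈ Finset.univ.filter P, f q.1 q.2
      = ∏ q ∈ Finset.univ.filter (fun q : Fin N × Fin N => P q.swap), f q.2 q.1 := by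
  refine Finset.prod_nbij' Prod.swap Prod.swap ?_ ?_ ?_ ?_ ?_
  · intro q hq; simp only [mem_filter, mem_univ, true_and] at hq ⊢; simpa using hq
  · intro q hq; simp only [mem_filter, mem_univ, true_and] at hq ⊢; simpa using hq
  · intro q _; simp
  · intro q _; simp
  · intro q _; rfl

/-- Order-flip helper. -/
lemma flip_lt {N : ℕ} {u v : Fin N} (huv : u ≠ v) : ¬ (u < v) ↔ v < u := by
  constructor
  · intro h'
    exact (lt_or_gt_of_ne huv).resolve_left h'
  · intro h' h''
    exact lt_irrefl _ (h'.trans h'')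

/-- Splitting a filtered product by a further predicate. -/
lemma split_prod {N : ℕ} (P Q : Fin N × Fin N → Prop) [DecidablePred P] [DecidablePred Q]
    (f : Fin N × Fin N → ℂ) :
    ∏ q ∈ Finset.univ.filter P, f q =
      (∏ q ∈ Finset.univ.filter (fun q => P q ∧ Q q), f q) *
      ∏ q ∈ Finset.univ.filter (fun q => P q ∧ ¬ Q q), f q := by
  rw [← Finset.prod_filter_mul_prod_filter_not (Finset.univ.filter P) Q]
  rw [Finset.filter_filter, Finset.filter_filter]

/-- The key amplitude transformation. -/
lemma amp_transform (N : ℕ) (Δ : ℝ) (ξ : Fin N → ℂ)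
    (h : ∀ i j : Fin N, 1 + ξ i * ξ j - 2 * (Δ : ℂ) * ξ i ≠ 0)
    (τ σ : Equiv.Perm (Fin N)) :
    betheAmp N Δ ξ σ =
      (∏ q ∈ Finset.univ.filter
          (fun q : Fin N × Fin N => q.2 < q.1 ∧ τ⁻¹ q.1 < τ⁻¹ q.2), bC Δ ξ q.1 q.2)
        * betheAmp N Δ (ξ ∘ τ) (τ⁻¹ * σ) := by
  classical
  have hA2 : betheAmp N Δ (ξ ∘ τ) (τ⁻¹ * σ) =
      ∏ q ∈ Finset.univ.filter
          (fun q : Fin N × Fin N => σ⁻¹ q.1 < σ⁻¹ q.2 ∧ τ⁻¹ q.2 < τ⁻¹ q.1),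
        bC Δ ξ q.1 q.2 := by
    rw [amp_eq]
    refine Finset.prod_nbij' (fun q => (τ q.1, τ q.2)) (fun q => (τ⁻¹ q.1, τ⁻¹ q.2))
      ?_ ?_ ?_ ?_ ?_
    · intro q hq
      simp only [mem_filter, mem_univ, true_and, mul_inv_rev, inv_inv,
        Equiv.Perm.mul_apply] at hq ⊢
      simpa using hq
    · intro q hq
      simp only [mem_filter, mem_univ, true_and, mul_inv_rev, inv_inv,
        Equiv.Perm.mul_apply] at hq ⊢
      simpa using hq
    · intro q _; simp
    · intro q _; simp
    · intro q _; rfl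
  rw [amp_eq, hA2]
  -- abbreviations
  set A : Fin N × Fin N → Prop := fun q => σ⁻¹ q.1 < σ⁻¹ q.2 with hA
  set T : Fin N × Fin N → Prop := fun q => τ⁻¹ q.1 < τ⁻¹ q.2 with hT
  have neA : ∀ q : Fin N × Fin N, A q → q.1 ≠ q.2 := by
    intro q hq e
    have h' : σ⁻¹ q.1 < σ⁻¹ q.2 := hq
    rw [e] at h'; exact lt_irrefl _ h'
  have neT : ∀ q : Fin N × Fin N, T q → q.1 ≠ q.2 := by
    intro q hq e
    have h' : τ⁻¹ q.1 < τ⁻¹ q.2 := hq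
    rw [e] at h'; exact lt_irrefl _ h'
  have neN : ∀ q : Fin N × Fin N, q.2 < q.1 → q.1 ≠ q.2 := by
    intro q hq e; rw [e] at hq; exact lt_irrefl _ hq
  have neAinv : ∀ q : Fin N × Fin N, q.1 ≠ q.2 → σ⁻¹ q.1 ≠ σ⁻¹ q.2 := by
    intro q hq e; exact hq (σ⁻¹.injective e)
  have neTinv : ∀ q : Fin N × Fin N, q.1 ≠ q.2 → τ⁻¹ q.1 ≠ τ⁻¹ q.2 := by
    intro q hq e; exact hq (τ⁻¹.injective e)
  -- splits
  rw [split_prod (fun q : Fin N × Fin N => A q ∧ q.2 < q.1) T]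
  rw [split_prod (fun q : Fin N × Fin N => q.2 < q.1 ∧ T q) A]
  rw [split_prod (fun q : Fin N × Fin N => A q ∧ τ⁻¹ q.2 < τ⁻¹ q.1)
      (fun q => q.1 < q.2)]
  -- (c1) common part
  have c1 : (Finset.univ.filter (fun q : Fin N × Fin N => (A q ∧ q.2 < q.1) ∧ T q))
      = Finset.univ.filter (fun q : Fin N × Fin N => (q.2 < q.1 ∧ T q) ∧ A q) := by
    ext q; simp only [mem_filter, mem_univ, true_and]; tauto
  -- (c2)
  have c2 : (Finset.univ.filter (fun q : Fin N × Fin N => (A q ∧ q.2 < q.1) ∧ ¬ T q))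
      = Finset.univ.filter
          (fun q : Fin N × Fin N => (A q ∧ τ⁻¹ q.2 < τ⁻¹ q.1) ∧ ¬ q.1 < q.2) := by
    ext q; simp only [mem_filter, mem_univ, true_and]
    constructor
    · rintro ⟨⟨h1, h2⟩, h3⟩
      have hne := neA q h1
      exact ⟨⟨h1, (flip_lt (neTinv q hne)).mp h3⟩, fun h' => lt_irrefl _ (h2.trans h')⟩
    · rintro ⟨⟨h1, h2⟩, h3⟩
      have hne := neA q h1
      refine ⟨⟨h1, (flip_lt hne).mp h3⟩, ?_⟩
      intro h'
      exact lt_irrefl _ (h2.trans h')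
  -- (c3) cancellation
  have c3 : (∏ q ∈ Finset.univ.filter
        (fun q : Fin N × Fin N => (q.2 < q.1 ∧ T q) ∧ ¬ A q), bC Δ ξ q.1 q.2)
      * (∏ q ∈ Finset.univ.filter
          (fun q : Fin N × Fin N => (A q ∧ τ⁻¹ q.2 < τ⁻¹ q.1) ∧ q.1 < q.2),
            bC Δ ξ q.1 q.2) = 1 := by
    rw [prod_swap_filter (fun q : Fin N × Fin N => (A q ∧ τ⁻¹ q.2 < τ⁻¹ q.1) ∧ q.1 < q.2)]
    have e1 : (Finset.univ.filter
          (fun q : Fin N × Fin N => (q.2 < q.1 ∧ T q) ∧ ¬ A q))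
        = Finset.univ.filter
            (fun q : Fin N × Fin N =>
              (A q.swap ∧ τ⁻¹ q.swap.2 < τ⁻¹ q.swap.1) ∧ q.swap.1 < q.swap.2) := by
      ext q
      simp only [mem_filter, mem_univ, true_and, Prod.fst_swap, Prod.snd_swap, hA, hT]
      constructor
      · rintro ⟨⟨h1, h2⟩, h3⟩
        have hne : q.1 ≠ q.2 := neN q h1
        exact ⟨⟨(flip_lt (neAinv q hne)).mp h3, h2⟩, h1⟩
      · rintro ⟨⟨h1, h2⟩, h3⟩
        have hne : q.1 ≠ q.2 := (neN q h3)
        exact ⟨⟨h3, h2⟩, fun h' => lt_irrefl _ (h1.trans h')⟩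
    rw [e1, ← Finset.prod_mul_distrib]
    refine Finset.prod_eq_one ?_
    intro q _
    exact bC_mul h q.1 q.2
  rw [c1, c2]
  set a := ∏ q ∈ Finset.univ.filter
      (fun q : Fin N × Fin N => (q.2 < q.1 ∧ T q) ∧ A q), bC Δ ξ q.1 q.2 with ha
  set b := ∏ q ∈ Finset.univ.filter
      (fun q : Fin N × Fin N => (q.2 < q.1 ∧ T q) ∧ ¬ A q), bC Δ ξ q.1 q.2 with hb
  set d := ∏ q ∈ Finset.univ.filter
      (fun q : Fin N × Fin N => (A q ∧ τ⁻¹ q.2 < τ⁻¹ q.1) ∧ q.1 < q.2), bC Δ ξ q.1 q.2 with hd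
  set e := ∏ q ∈ Finset.univ.filter
      (fun q : Fin N × Fin N => (A q ∧ τ⁻¹ q.2 < τ⁻¹ q.1) ∧ ¬ q.1 < q.2), bC Δ ξ q.1 q.2 with he
  linear_combination (-(a * e)) * c3

/-- `u(ξ, x) = λ · u(τ·ξ, x)` for a nonzero `λ` depending only on `ξ` and `τ`. -/
theorem stmt2 (N : ℕ) (Δ : ℝ) (ξ : Fin N → ℂ)
    (h : ∀ i j : Fin N, 1 + ξ i * ξ j - 2 * (Δ : ℂ) * ξ i ≠ 0)
    (τ : Equiv.Perm (Fin N)) :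
    ∃ lam : ℂ, lam ≠ 0 ∧ ∀ x : Fin N → ℤ,
      betheU N Δ ξ x = lam * betheU N Δ (ξ ∘ τ) x := by
  classical
  refine ⟨(∏ q ∈ Finset.univ.filter
      (fun q : Fin N × Fin N => q.2 < q.1 ∧ τ⁻¹ q.1 < τ⁻¹ q.2), bC Δ ξ q.1 q.2),
    Finset.prod_ne_zero_iff.mpr fun q _ => bC_ne h q.1 q.2, ?_⟩
  intro x
  calc betheU N Δ ξ x
      = ∑ σ : Equiv.Perm (Fin N),
          (∏ q ∈ Finset.univ.filter
              (fun q : Fin N × Fin N => q.2 < q.1 ∧ τ⁻¹ q.1 < τ⁻¹ q.2), bC Δ ξ q.1 q.2)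
            * (betheAmp N Δ (ξ ∘ τ) (τ⁻¹ * σ) * ∏ i, (ξ ∘ τ) ((τ⁻¹ * σ) i) ^ x i) := by
        unfold betheU
        refine Finset.sum_congr rfl ?_
        intro σ _
        rw [amp_transform N Δ ξ h τ σ, mul_assoc]
        congr 1
        congr 1
        refine Finset.prod_congr rfl ?_
        intro i _
        simp [Equiv.Perm.mul_apply]
    _ = _ := by
        rw [← Finset.mul_sum]
        congr 1
        unfold betheU
        exact Equiv.sum_comp (Equiv.mulLeft τ⁻¹)
          (fun ρ => betheAmp N Δ (ξ ∘ τ) ρ * ∏ i, (ξ ∘ τ) (ρ i) ^ x i)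
end

section
/- If ξ ∈ ℂ^N satisfies the genericity condition and has two equal coordinates ξ_i = ξ_j with i ≠ j, then the Bethe coordinate function vanishes identically: u(ξ, x) = 0 for all x ∈ ℤ^N. -/
open Finset

/-- The basic two-variable factor. -/
noncomputable def Gf (Δ : ℝ) (a b : ℂ) : ℂ :=
  -((1 + a * b - 2 * (Δ : ℂ) * a) / (1 + a * b - 2 * (Δ : ℂ) * b))

lemma Gf_mul_Gf (Δ : ℝ) (a b : ℂ) (h1 : 1 + a * b - 2 * (Δ : ℂ) * a ≠ 0)
    (h2 : 1 + a * b - 2 * (Δ : ℂ) * b ≠ 0) : Gf Δ a b * Gf Δ b a = 1 := by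
  unfold Gf
  rw [neg_mul_neg, div_mul_div_comm, mul_comm b a]
  rw [mul_comm (1 + a * b - 2 * (Δ : ℂ) * a) (1 + a * b - 2 * (Δ : ℂ) * b)]
  exact div_self (mul_ne_zero h2 h1)

/-- The Bethe amplitude, written in terms of inversions on the value side. -/
noncomputable def amp2 (N : ℕ) (Δ : ℝ) (ξ : Fin N → ℂ) (τ : Equiv.Perm (Fin N)) : ℂ :=
  ∏ q ∈ Finset.univ.filter (fun q : Fin N × Fin N => q.1 < q.2 ∧ τ q.2 < τ q.1),
    Gf Δ (ξ q.2) (ξ q.1)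

lemma betheAmp_eq_amp2 (N : ℕ) (Δ : ℝ) (ξ : Fin N → ℂ) (σ : Equiv.Perm (Fin N)) :
    betheAmp N Δ ξ σ = amp2 N Δ ξ σ⁻¹ := by
  unfold betheAmp amp2 Gf
  refine Finset.prod_nbij (fun p => (σ p.2, σ p.1)) ?_ ?_ ?_ ?_
  · intro p hp
    simp only [mem_filter, mem_univ, true_and] at hp ⊢
    exact ⟨hp.2, by simp [hp.1]⟩
  · intro p hp q hq hpq
    simp only [Prod.mk.injEq] at hpq
    exact Prod.ext (σ.injective hpq.2) (σ.injective hpq.1)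
  · intro q hq
    simp only [coe_filter, Set.mem_setOf_eq, mem_coe, mem_univ, true_and, Set.mem_image] at hq ⊢
    exact ⟨(σ⁻¹ q.2, σ⁻¹ q.1), ⟨hq.2, by simp [hq.1]⟩, by simp⟩
  · intro p hp
    simp

section Swap

lemma xi_swap (N : ℕ) (ξ : Fin N → ℂ) (i j : Fin N) (hξ : ξ i = ξ j) (v : Fin N) : ξ (Equiv.swap i j v) = ξ v := by
  rcases eq_or_ne v i with rfl | hvi
  · rw [Equiv.swap_apply_left, hξ]
  rcases eq_or_ne v j with rfl | hvj
  · rw [Equiv.swap_apply_right, hξ]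
  · rw [Equiv.swap_apply_of_ne_of_ne hvi hvj]

lemma Gf_pair (N : ℕ) (Δ : ℝ) (ξ : Fin N → ℂ)
    (h : ∀ i j : Fin N, 1 + ξ i * ξ j - 2 * (Δ : ℂ) * ξ i ≠ 0) (a b : Fin N) : Gf Δ (ξ a) (ξ b) * Gf Δ (ξ b) (ξ a) = 1 := by
  refine Gf_mul_Gf Δ (ξ a) (ξ b) (h a b) ?_
  rw [mul_comm]
  exact h b a

/-- The key cocycle: the product of `Gf` over pairs flipped by the swap is `-1`. -/
lemma flip_prod_eq_neg_one (N : ℕ) (Δ : ℝ) (ξ : Fin N → ℂ)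
    (h : ∀ i j : Fin N, 1 + ξ i * ξ j - 2 * (Δ : ℂ) * ξ i ≠ 0)
    (i j : Fin N) (hij : i < j) (hξ : ξ i = ξ j) :
    ∏ q ∈ Finset.univ.filter
        (fun q : Fin N × Fin N => q.1 < q.2 ∧ Equiv.swap i j q.2 < Equiv.swap i j q.1),
      Gf Δ (ξ q.1) (ξ q.2) = -1 := by
  classical
  set s := Equiv.swap i j with hs
  have hijmem : (i, j) ∈ Finset.univ.filter
      (fun q : Fin N × Fin N => q.1 < q.2 ∧ s q.2 < s q.1) := by
    simp only [mem_filter, mem_univ, true_and]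
    exact ⟨hij, by rw [hs, Equiv.swap_apply_left, Equiv.swap_apply_right]; exact hij⟩
  rw [← Finset.mul_prod_erase _ _ hijmem]
  have h1 : Gf Δ (ξ (i, j).1) (ξ (i, j).2) = -1 := by
    unfold Gf
    rw [hξ]
    rw [div_self (h j j)]
  rw [h1]
  have h2 : ∏ q ∈ (Finset.univ.filter
      (fun q : Fin N × Fin N => q.1 < q.2 ∧ s q.2 < s q.1)).erase (i, j),
      Gf Δ (ξ q.1) (ξ q.2) = 1 := by
    refine Finset.prod_involution (fun q _ => (s q.2, s q.1)) ?_ ?_ ?_ ?_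
    · intro q hq
      exact by
        have := Gf_pair N Δ ξ h q.1 q.2
        calc Gf Δ (ξ q.1) (ξ q.2) * Gf Δ (ξ (s q.2)) (ξ (s q.1))
            = Gf Δ (ξ q.1) (ξ q.2) * Gf Δ (ξ q.2) (ξ q.1) := by
              rw [hs, xi_swap N ξ i j hξ, xi_swap N ξ i j hξ]
          _ = 1 := this
    · intro q hq _
      simp only [mem_erase, mem_filter, mem_univ, true_and] at hq
      obtain ⟨hne, hlt, hflip⟩ := hq
      intro heq
      have h1 : s q.2 = q.1 := congrArg Prod.fst heq
      have h2 : s q.1 = q.2 := congrArg Prod.snd heq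
      -- then s swaps q.1, q.2, forcing {q.1,q.2} = {i,j}, contradicting membership in erase
      rcases eq_or_ne q.1 i with hq1 | hq1
      · apply hne
        have : q.2 = j := by
          rw [← h2, hq1, hs, Equiv.swap_apply_left]
        ext <;> simp [hq1, this]
      rcases eq_or_ne q.1 j with hq1' | hq1'
      · have : q.2 = i := by rw [← h2, hq1', hs, Equiv.swap_apply_right]
        rw [hq1', this] at hlt
        exact absurd hij (not_lt.mpr hlt.le)
      · have : s q.1 = q.1 := Equiv.swap_apply_of_ne_of_ne hq1 hq1'
        rw [h2] at this
        exact absurd this.symm (ne_of_lt hlt)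
    · intro q hq
      simp only [mem_erase, mem_filter, mem_univ, true_and] at hq ⊢
      obtain ⟨hne, hlt, hflip⟩ := hq
      refine ⟨?_, hflip, by simp [hs, Equiv.swap_apply_self]; exact hlt⟩
      intro heq
      have h1 : s q.2 = i := congrArg Prod.fst heq
      have h2 : s q.1 = j := congrArg Prod.snd heq
      apply hne
      have e1 : q.2 = j := by
        have := congrArg s h1
        rwa [Equiv.swap_apply_self, hs, Equiv.swap_apply_left] at this
      have e2 : q.1 = i := by
        have := congrArg s h2
        rwa [Equiv.swap_apply_self, hs, Equiv.swap_apply_right] at this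
      ext <;> simp [e1, e2]
    · intro q hq
      simp [hs, Equiv.swap_apply_self]
  rw [h2, mul_one]

/-- Right multiplication by the swap negates `amp2`. -/
lemma amp2_mul_swap (N : ℕ) (Δ : ℝ) (ξ : Fin N → ℂ)
    (h : ∀ i j : Fin N, 1 + ξ i * ξ j - 2 * (Δ : ℂ) * ξ i ≠ 0)
    (i j : Fin N) (hij : i < j) (hξ : ξ i = ξ j) (τ : Equiv.Perm (Fin N)) :
    amp2 N Δ ξ (τ * Equiv.swap i j) = -amp2 N Δ ξ τ := by
  classical
  set s := Equiv.swap i j with hs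
  -- rewrite both sides as products over all ordered pairs with `ite` factors
  have filt : ∀ (π : Equiv.Perm (Fin N)),
      amp2 N Δ ξ π = ∏ q ∈ Finset.univ.filter (fun q : Fin N × Fin N => q.1 < q.2),
        (if π q.2 < π q.1 then Gf Δ (ξ q.2) (ξ q.1) else 1) := by
    intro π
    rw [Finset.prod_filter]
    unfold amp2
    rw [Finset.prod_filter]
    refine Finset.prod_congr rfl fun q _ => ?_
    by_cases h1 : q.1 < q.2 <;> by_cases h2 : π q.2 < π q.1 <;> simp [h1, h2]
  rw [filt (τ * s), filt τ]
  -- reindex the LHS by the involution q ↦ sorted (s q.1, s q.2)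
  set P := Finset.univ.filter (fun q : Fin N × Fin N => q.1 < q.2) with hP
  set m : Fin N × Fin N → Fin N × Fin N :=
    fun q => if s q.1 < s q.2 then (s q.1, s q.2) else (s q.2, s q.1) with hm
  have hmP : ∀ q ∈ P, m q ∈ P := by
    intro q hq
    simp only [hP, mem_filter, mem_univ, true_and] at hq ⊢
    by_cases hc : s q.1 < s q.2
    · simp only [hm, if_pos hc]; exact hc
    · have hne : s q.1 ≠ s q.2 := fun hcon => (ne_of_lt hq) (s.injective hcon)
      have : s q.2 < s q.1 := lt_of_le_of_ne (not_lt.mp hc) (Ne.symm hne)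
      simp only [hm, if_neg hc]; exact this
  have hmm : ∀ q ∈ P, m (m q) = q := by
    intro q hq
    by_cases hc : s q.1 < s q.2
    · simp only [hm, if_pos hc]
      have hcond : s (s q.1) < s (s q.2) := by
        simp only [hs, Equiv.swap_apply_self]
        simp only [hP, mem_filter, mem_univ, true_and] at hq
        exact hq
      rw [if_pos hcond]
      simp [hs, Equiv.swap_apply_self]
    · simp only [hm, if_neg hc]
      have hcond : ¬ s (s q.2) < s (s q.1) := by
        simp only [hs, Equiv.swap_apply_self]
        simp only [hP, mem_filter, mem_univ, true_and] at hq
        exact not_lt.mpr hq.le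
      rw [if_neg hcond]
      simp [hs, Equiv.swap_apply_self]
  have reindex :
      (∏ q ∈ P, (if (τ * s) q.2 < (τ * s) q.1 then Gf Δ (ξ q.2) (ξ q.1) else 1)) =
      ∏ q ∈ P, (if (τ * s) (m q).2 < (τ * s) (m q).1 then Gf Δ (ξ (m q).2) (ξ (m q).1) else 1) :=
    Finset.prod_nbij' m m hmP hmP hmm hmm (fun q hq => by rw [hmm q hq])
  rw [reindex]
  -- pointwise: the reindexed factor equals (original factor) * (flip factor)
  have pointwise : ∀ q ∈ P,
      (if (τ * s) (m q).2 < (τ * s) (m q).1 then Gf Δ (ξ (m q).2) (ξ (m q).1) else 1) =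
      (if τ q.2 < τ q.1 then Gf Δ (ξ q.2) (ξ q.1) else 1) *
      (if s q.2 < s q.1 then Gf Δ (ξ q.1) (ξ q.2) else 1) := by
    intro q hq
    simp only [hP, mem_filter, mem_univ, true_and] at hq
    have hxis : ∀ v, ξ (s v) = ξ v := fun v => xi_swap N ξ i j hξ v
    have hne : s q.1 ≠ s q.2 := fun hcon => (ne_of_lt hq) (s.injective hcon)
    have htne : τ q.1 ≠ τ q.2 := fun hcon => (ne_of_lt hq) (τ.injective hcon)
    by_cases hc : s q.1 < s q.2
    · -- not flipped
      simp only [hm, if_pos hc, Equiv.Perm.mul_apply]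
      simp only [hs, Equiv.swap_apply_self]
      rw [if_neg (not_lt.mpr hc.le), mul_one, hxis q.1, hxis q.2]
    · -- flipped
      have hflip : s q.2 < s q.1 := lt_of_le_of_ne (not_lt.mp hc) (Ne.symm hne)
      simp only [hm, if_neg hc, Equiv.Perm.mul_apply]
      simp only [hs, Equiv.swap_apply_self]
      rw [if_pos hflip, hxis q.1, hxis q.2]
      by_cases ht : τ q.1 < τ q.2
      · rw [if_pos ht, if_neg (not_lt.mpr ht.le), one_mul]
      · have ht' : τ q.2 < τ q.1 := lt_of_le_of_ne (not_lt.mp ht) (Ne.symm htne)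
        rw [if_neg (not_lt.mpr ht'.le), if_pos ht']
        exact (Gf_pair N Δ ξ h q.2 q.1).symm
  rw [Finset.prod_congr rfl pointwise, Finset.prod_mul_distrib]
  have Kval : (∏ q ∈ P, (if s q.2 < s q.1 then Gf Δ (ξ q.1) (ξ q.2) else 1)) = -1 := by
    rw [← Finset.prod_filter]
    rw [hP, Finset.filter_filter]
    exact flip_prod_eq_neg_one N Δ ξ h i j hij hξ
  rw [Kval, mul_neg_one]

end Swap

/-- If two coordinates of `ξ` coincide, then `u(ξ, ·)` vanishes identically. -/
theorem stmt3 (N : ℕ) (Δ : ℝ) (ξ : Fin N → ℂ)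
    (h : ∀ i j : Fin N, 1 + ξ i * ξ j - 2 * (Δ : ℂ) * ξ i ≠ 0)
    (i j : Fin N) (hij : i ≠ j) (hξ : ξ i = ξ j) :
    ∀ x : Fin N → ℤ, betheU N Δ ξ x = 0 := by
  -- reduce to the case i < j
  wlog hlt : i < j generalizing i j
  · exact this j i hij.symm hξ.symm (lt_of_le_of_ne (not_lt.mp hlt) hij.symm)
  intro x
  set s := Equiv.swap i j with hs
  have hxis : ∀ v, ξ (s v) = ξ v := fun v => xi_swap N ξ i j hξ v
  set F : Equiv.Perm (Fin N) → ℂ := fun σ => betheAmp N Δ ξ σ * ∏ k, ξ (σ k) ^ x k with hF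
  have key : ∀ σ, F (s * σ) = -F σ := by
    intro σ
    have hamp : betheAmp N Δ ξ (s * σ) = -betheAmp N Δ ξ σ := by
      rw [betheAmp_eq_amp2, betheAmp_eq_amp2]
      have : (s * σ)⁻¹ = σ⁻¹ * s := by
        rw [mul_inv_rev, hs, Equiv.swap_inv]
      rw [this]
      exact amp2_mul_swap N Δ ξ h i j hlt hξ σ⁻¹
    have hmon : (∏ k, ξ ((s * σ) k) ^ x k) = ∏ k, ξ (σ k) ^ x k := by
      refine Finset.prod_congr rfl fun k _ => ?_
      rw [Equiv.Perm.mul_apply, hxis]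
    simp only [hF, hamp, hmon, neg_mul]
  have hsum : betheU N Δ ξ x = ∑ σ : Equiv.Perm (Fin N), F σ := rfl
  have reidx : (∑ σ : Equiv.Perm (Fin N), F σ) = ∑ σ : Equiv.Perm (Fin N), F (s * σ) :=
    (Fintype.sum_equiv (Equiv.mulLeft s) (fun σ => F (s * σ)) F (fun σ => rfl)).symm
  have : (∑ σ : Equiv.Perm (Fin N), F σ) = -∑ σ : Equiv.Perm (Fin N), F σ := by
    conv_lhs => rw [reidx]
    rw [← Finset.sum_neg_distrib]
    exact Finset.sum_congr rfl fun σ _ => key σ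
  rw [hsum]
  linear_combination this / 2
end
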